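/- The subgroup G₁₃ of GL(2,ℂ) generated by the four matrices (1/√2)·[[0, 1+i],[1−i, 0]], (1/√2)·[[1, 1],[1, −1]], (1/√2)·[[1, i],[−i, −1]] and the scalar matrix i·I has order 96, and its image in PGL(2,ℂ) is isomorphic to the symmetric group S₄ on 4 letters. -/
import Mathlib

structure Kk where
  (x y z w : ℤ)
deriving DecidableEq

structure V where
  (a b c d : Kk)
deriving DecidableEq

def kconv (u v : Kk) : Kk :=
  ⟨u.x*v.x - u.y*v.w - u.z*v.z - u.w*v.y,
   u.x*v.y + u.y*v.x - u.z*v.w - u.w*v.z,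
   u.x*v.z + u.y*v.y + u.z*v.x - u.w*v.w,
   u.x*v.w + u.y*v.z + u.z*v.y + u.w*v.x⟩

def kadd (u v : Kk) : Kk := ⟨u.x+v.x, u.y+v.y, u.z+v.z, u.w+v.w⟩
def kdouble (u : Kk) : Kk := ⟨2*u.x, 2*u.y, 2*u.z, 2*u.w⟩

def vconv (X Y : V) : V :=
  ⟨kadd (kconv X.a Y.a) (kconv X.b Y.c),
   kadd (kconv X.a Y.b) (kconv X.b Y.d),
   kadd (kconv X.c Y.a) (kconv X.d Y.c),
   kadd (kconv X.c Y.b) (kconv X.d Y.d)⟩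

def vdouble (X : V) : V := ⟨kdouble X.a, kdouble X.b, kdouble X.c, kdouble X.d⟩

def vone : V := ⟨⟨2,0,0,0⟩,⟨0,0,0,0⟩,⟨0,0,0,0⟩,⟨2,0,0,0⟩⟩
def vmone : V := ⟨⟨-2,0,0,0⟩,⟨0,0,0,0⟩,⟨0,0,0,0⟩,⟨-2,0,0,0⟩⟩
def viI : V := ⟨⟨0,0,2,0⟩,⟨0,0,0,0⟩,⟨0,0,0,0⟩,⟨0,0,2,0⟩⟩
def vmiI : V := ⟨⟨0,0,-2,0⟩,⟨0,0,0,0⟩,⟨0,0,0,0⟩,⟨0,0,-2,0⟩⟩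

def gen : Fin 4 → V :=
  ![⟨⟨0,0,0,0⟩,⟨0,2,0,0⟩,⟨0,0,0,-2⟩,⟨0,0,0,0⟩⟩,
    ⟨⟨0,1,0,-1⟩,⟨0,1,0,-1⟩,⟨0,1,0,-1⟩,⟨0,-1,0,1⟩⟩,
    ⟨⟨0,1,0,-1⟩,⟨0,1,0,1⟩,⟨0,-1,0,-1⟩,⟨0,-1,0,1⟩⟩,
    ⟨⟨0,0,2,0⟩,⟨0,0,0,0⟩,⟨0,0,0,0⟩,⟨0,0,2,0⟩⟩]

def mkP (f g : Fin 4 → Fin 4) (h1 : ∀ x, g (f x) = x := by decide)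
    (h2 : ∀ x, f (g x) = x := by decide) : Equiv.Perm (Fin 4) := ⟨f, g, h1, h2⟩

def gperm : Fin 4 → Equiv.Perm (Fin 4) := ![mkP ![0,1,3,2] ![0,1,3,2], mkP ![2,1,0,3] ![2,1,0,3], mkP ![0,2,1,3] ![0,2,1,3], mkP ![0,1,2,3] ![0,1,2,3]]

def Tb0 : List (List (Fin 4) × V × Equiv.Perm (Fin 4)) := [
  ([], ⟨⟨2,0,0,0⟩,⟨0,0,0,0⟩,⟨0,0,0,0⟩,⟨2,0,0,0⟩⟩, mkP ![0,1,2,3] ![0,1,2,3]),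
  ([0], ⟨⟨0,0,0,0⟩,⟨0,2,0,0⟩,⟨0,0,0,-2⟩,⟨0,0,0,0⟩⟩, mkP ![0,1,3,2] ![0,1,3,2]),
  ([1], ⟨⟨0,1,0,-1⟩,⟨0,1,0,-1⟩,⟨0,1,0,-1⟩,⟨0,-1,0,1⟩⟩, mkP ![2,1,0,3] ![2,1,0,3]),
  ([2], ⟨⟨0,1,0,-1⟩,⟨0,1,0,1⟩,⟨0,-1,0,-1⟩,⟨0,-1,0,1⟩⟩, mkP ![0,2,1,3] ![0,2,1,3]),
  ([3], ⟨⟨0,0,2,0⟩,⟨0,0,0,0⟩,⟨0,0,0,0⟩,⟨0,0,2,0⟩⟩, mkP ![0,1,2,3] ![0,1,2,3]),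
  ([0,1], ⟨⟨1,0,1,0⟩,⟨-1,0,-1,0⟩,⟨1,0,-1,0⟩,⟨1,0,-1,0⟩⟩, mkP ![3,1,0,2] ![2,1,3,0]),
  ([0,2], ⟨⟨1,0,-1,0⟩,⟨-1,0,-1,0⟩,⟨1,0,-1,0⟩,⟨1,0,1,0⟩⟩, mkP ![0,3,1,2] ![0,2,3,1]),
  ([1,0], ⟨⟨1,0,-1,0⟩,⟨1,0,1,0⟩,⟨-1,0,1,0⟩,⟨1,0,1,0⟩⟩, mkP ![2,1,3,0] ![3,1,0,2]),
  ([1,2], ⟨⟨1,0,-1,0⟩,⟨-1,0,1,0⟩,⟨1,0,1,0⟩,⟨1,0,1,0⟩⟩, mkP ![2,0,1,3] ![1,2,0,3]),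
  ([2,0], ⟨⟨1,0,1,0⟩,⟨1,0,1,0⟩,⟨-1,0,1,0⟩,⟨1,0,-1,0⟩⟩, mkP ![0,2,3,1] ![0,3,1,2]),
  ([2,1], ⟨⟨1,0,1,0⟩,⟨1,0,-1,0⟩,⟨-1,0,-1,0⟩,⟨1,0,-1,0⟩⟩, mkP ![1,2,0,3] ![2,0,1,3]),
  ([3,0], ⟨⟨0,0,0,0⟩,⟨0,0,0,2⟩,⟨0,2,0,0⟩,⟨0,0,0,0⟩⟩, mkP ![0,1,3,2] ![0,1,3,2]),
  ([3,1], ⟨⟨0,1,0,1⟩,⟨0,1,0,1⟩,⟨0,1,0,1⟩,⟨0,-1,0,-1⟩⟩, mkP ![2,1,0,3] ![2,1,0,3]),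
  ([3,2], ⟨⟨0,1,0,1⟩,⟨0,-1,0,1⟩,⟨0,1,0,-1⟩,⟨0,-1,0,-1⟩⟩, mkP ![0,2,1,3] ![0,2,1,3]),
  ([3,3], ⟨⟨-2,0,0,0⟩,⟨0,0,0,0⟩,⟨0,0,0,0⟩,⟨-2,0,0,0⟩⟩, mkP ![0,1,2,3] ![0,1,2,3]),
  ([0,1,0], ⟨⟨0,-1,0,1⟩,⟨0,1,0,1⟩,⟨0,-1,0,-1⟩,⟨0,1,0,-1⟩⟩, mkP ![3,1,2,0] ![3,1,2,0])]
def Tb1 : List (List (Fin 4) × V × Equiv.Perm (Fin 4)) := [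
  ([0,1,2], ⟨⟨0,1,0,1⟩,⟨0,1,0,1⟩,⟨0,-1,0,-1⟩,⟨0,1,0,1⟩⟩, mkP ![3,0,1,2] ![1,2,3,0]),
  ([0,2,0], ⟨⟨0,-1,0,1⟩,⟨0,1,0,-1⟩,⟨0,1,0,-1⟩,⟨0,1,0,-1⟩⟩, mkP ![0,3,2,1] ![0,3,2,1]),
  ([0,2,1], ⟨⟨0,-1,0,-1⟩,⟨0,1,0,-1⟩,⟨0,1,0,-1⟩,⟨0,-1,0,-1⟩⟩, mkP ![1,3,0,2] ![2,0,3,1]),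
  ([1,0,1], ⟨⟨0,1,0,-1⟩,⟨0,-1,0,-1⟩,⟨0,1,0,1⟩,⟨0,-1,0,1⟩⟩, mkP ![3,1,2,0] ![3,1,2,0]),
  ([1,0,2], ⟨⟨0,0,0,-2⟩,⟨0,0,0,0⟩,⟨0,0,0,0⟩,⟨0,-2,0,0⟩⟩, mkP ![2,3,1,0] ![3,2,0,1]),
  ([1,2,0], ⟨⟨0,1,0,1⟩,⟨0,1,0,-1⟩,⟨0,1,0,-1⟩,⟨0,1,0,1⟩⟩, mkP ![2,0,3,1] ![1,3,0,2]),
  ([1,2,1], ⟨⟨0,0,0,0⟩,⟨0,0,0,-2⟩,⟨0,2,0,0⟩,⟨0,0,0,0⟩⟩, mkP ![1,0,2,3] ![1,0,2,3]),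
  ([2,0,1], ⟨⟨0,2,0,0⟩,⟨0,0,0,0⟩,⟨0,0,0,0⟩,⟨0,0,0,2⟩⟩, mkP ![3,2,0,1] ![2,3,1,0]),
  ([2,0,2], ⟨⟨0,1,0,-1⟩,⟨0,-1,0,1⟩,⟨0,-1,0,1⟩,⟨0,-1,0,1⟩⟩, mkP ![0,3,2,1] ![0,3,2,1]),
  ([2,1,0], ⟨⟨0,-1,0,-1⟩,⟨0,1,0,1⟩,⟨0,-1,0,-1⟩,⟨0,-1,0,-1⟩⟩, mkP ![1,2,3,0] ![3,0,1,2]),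
  ([2,1,2], ⟨⟨0,0,0,0⟩,⟨0,0,0,2⟩,⟨0,-2,0,0⟩,⟨0,0,0,0⟩⟩, mkP ![1,0,2,3] ![1,0,2,3]),
  ([3,0,1], ⟨⟨-1,0,1,0⟩,⟨1,0,-1,0⟩,⟨1,0,1,0⟩,⟨1,0,1,0⟩⟩, mkP ![3,1,0,2] ![2,1,3,0]),
  ([3,0,2], ⟨⟨1,0,1,0⟩,⟨1,0,-1,0⟩,⟨1,0,1,0⟩,⟨-1,0,1,0⟩⟩, mkP ![0,3,1,2] ![0,2,3,1]),
  ([3,1,0], ⟨⟨1,0,1,0⟩,⟨-1,0,1,0⟩,⟨-1,0,-1,0⟩,⟨-1,0,1,0⟩⟩, mkP ![2,1,3,0] ![3,1,0,2]),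
  ([3,1,2], ⟨⟨1,0,1,0⟩,⟨-1,0,-1,0⟩,⟨-1,0,1,0⟩,⟨-1,0,1,0⟩⟩, mkP ![2,0,1,3] ![1,2,0,3]),
  ([3,2,0], ⟨⟨-1,0,1,0⟩,⟨-1,0,1,0⟩,⟨-1,0,-1,0⟩,⟨1,0,1,0⟩⟩, mkP ![0,2,3,1] ![0,3,1,2])]
def Tb2 : List (List (Fin 4) × V × Equiv.Perm (Fin 4)) := [
  ([3,2,1], ⟨⟨-1,0,1,0⟩,⟨1,0,1,0⟩,⟨1,0,-1,0⟩,⟨1,0,1,0⟩⟩, mkP ![1,2,0,3] ![2,0,1,3]),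
  ([3,3,0], ⟨⟨0,0,0,0⟩,⟨0,-2,0,0⟩,⟨0,0,0,2⟩,⟨0,0,0,0⟩⟩, mkP ![0,1,3,2] ![0,1,3,2]),
  ([3,3,1], ⟨⟨0,-1,0,1⟩,⟨0,-1,0,1⟩,⟨0,-1,0,1⟩,⟨0,1,0,-1⟩⟩, mkP ![2,1,0,3] ![2,1,0,3]),
  ([3,3,2], ⟨⟨0,-1,0,1⟩,⟨0,-1,0,-1⟩,⟨0,1,0,1⟩,⟨0,1,0,-1⟩⟩, mkP ![0,2,1,3] ![0,2,1,3]),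
  ([3,3,3], ⟨⟨0,0,-2,0⟩,⟨0,0,0,0⟩,⟨0,0,0,0⟩,⟨0,0,-2,0⟩⟩, mkP ![0,1,2,3] ![0,1,2,3]),
  ([0,1,2,0], ⟨⟨1,0,1,0⟩,⟨-1,0,1,0⟩,⟨1,0,1,0⟩,⟨1,0,-1,0⟩⟩, mkP ![3,0,2,1] ![1,3,2,0]),
  ([0,2,0,1], ⟨⟨0,0,0,0⟩,⟨-2,0,0,0⟩,⟨2,0,0,0⟩,⟨0,0,0,0⟩⟩, mkP ![2,3,0,1] ![2,3,0,1]),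
  ([0,2,1,0], ⟨⟨1,0,-1,0⟩,⟨1,0,-1,0⟩,⟨-1,0,-1,0⟩,⟨1,0,1,0⟩⟩, mkP ![1,3,2,0] ![3,0,2,1]),
  ([1,0,1,0], ⟨⟨-1,0,-1,0⟩,⟨1,0,1,0⟩,⟨-1,0,1,0⟩,⟨-1,0,1,0⟩⟩, mkP ![3,1,0,2] ![2,1,3,0]),
  ([1,0,2,0], ⟨⟨0,0,0,0⟩,⟨2,0,0,0⟩,⟨-2,0,0,0⟩,⟨0,0,0,0⟩⟩, mkP ![2,3,0,1] ![2,3,0,1]),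
  ([1,2,1,0], ⟨⟨0,0,-2,0⟩,⟨0,0,0,0⟩,⟨0,0,0,0⟩,⟨0,0,2,0⟩⟩, mkP ![1,0,3,2] ![1,0,3,2]),
  ([2,0,1,0], ⟨⟨0,0,0,0⟩,⟨0,0,2,0⟩,⟨0,0,2,0⟩,⟨0,0,0,0⟩⟩, mkP ![3,2,1,0] ![3,2,1,0]),
  ([2,0,2,0], ⟨⟨-1,0,1,0⟩,⟨1,0,1,0⟩,⟨-1,0,1,0⟩,⟨-1,0,-1,0⟩⟩, mkP ![0,3,1,2] ![0,2,3,1]),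
  ([2,1,0,1], ⟨⟨0,0,0,0⟩,⟨0,0,-2,0⟩,⟨0,0,-2,0⟩,⟨0,0,0,0⟩⟩, mkP ![3,2,1,0] ![3,2,1,0]),
  ([2,1,2,0], ⟨⟨0,0,2,0⟩,⟨0,0,0,0⟩,⟨0,0,0,0⟩,⟨0,0,-2,0⟩⟩, mkP ![1,0,3,2] ![1,0,3,2]),
  ([2,1,2,1], ⟨⟨-1,0,1,0⟩,⟨1,0,-1,0⟩,⟨-1,0,-1,0⟩,⟨-1,0,-1,0⟩⟩, mkP ![2,0,1,3] ![1,2,0,3])]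
def Tb3 : List (List (Fin 4) × V × Equiv.Perm (Fin 4)) := [
  ([3,0,1,0], ⟨⟨0,-1,0,-1⟩,⟨0,-1,0,1⟩,⟨0,1,0,-1⟩,⟨0,1,0,1⟩⟩, mkP ![3,1,2,0] ![3,1,2,0]),
  ([3,0,1,2], ⟨⟨0,-1,0,1⟩,⟨0,-1,0,1⟩,⟨0,1,0,-1⟩,⟨0,-1,0,1⟩⟩, mkP ![3,0,1,2] ![1,2,3,0]),
  ([3,0,2,0], ⟨⟨0,-1,0,-1⟩,⟨0,1,0,1⟩,⟨0,1,0,1⟩,⟨0,1,0,1⟩⟩, mkP ![0,3,2,1] ![0,3,2,1]),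
  ([3,0,2,1], ⟨⟨0,1,0,-1⟩,⟨0,1,0,1⟩,⟨0,1,0,1⟩,⟨0,1,0,-1⟩⟩, mkP ![1,3,0,2] ![2,0,3,1]),
  ([3,1,0,1], ⟨⟨0,1,0,1⟩,⟨0,1,0,-1⟩,⟨0,-1,0,1⟩,⟨0,-1,0,-1⟩⟩, mkP ![3,1,2,0] ![3,1,2,0]),
  ([3,1,0,2], ⟨⟨0,2,0,0⟩,⟨0,0,0,0⟩,⟨0,0,0,0⟩,⟨0,0,0,-2⟩⟩, mkP ![2,3,1,0] ![3,2,0,1]),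
  ([3,1,2,0], ⟨⟨0,-1,0,1⟩,⟨0,1,0,1⟩,⟨0,1,0,1⟩,⟨0,-1,0,1⟩⟩, mkP ![2,0,3,1] ![1,3,0,2]),
  ([3,1,2,1], ⟨⟨0,0,0,0⟩,⟨0,2,0,0⟩,⟨0,0,0,2⟩,⟨0,0,0,0⟩⟩, mkP ![1,0,2,3] ![1,0,2,3]),
  ([3,2,0,1], ⟨⟨0,0,0,2⟩,⟨0,0,0,0⟩,⟨0,0,0,0⟩,⟨0,-2,0,0⟩⟩, mkP ![3,2,0,1] ![2,3,1,0]),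
  ([3,2,0,2], ⟨⟨0,1,0,1⟩,⟨0,-1,0,-1⟩,⟨0,-1,0,-1⟩,⟨0,-1,0,-1⟩⟩, mkP ![0,3,2,1] ![0,3,2,1]),
  ([3,2,1,0], ⟨⟨0,1,0,-1⟩,⟨0,-1,0,1⟩,⟨0,1,0,-1⟩,⟨0,1,0,-1⟩⟩, mkP ![1,2,3,0] ![3,0,1,2]),
  ([3,2,1,2], ⟨⟨0,0,0,0⟩,⟨0,-2,0,0⟩,⟨0,0,0,-2⟩,⟨0,0,0,0⟩⟩, mkP ![1,0,2,3] ![1,0,2,3]),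
  ([3,3,1,0], ⟨⟨-1,0,1,0⟩,⟨-1,0,-1,0⟩,⟨1,0,-1,0⟩,⟨-1,0,-1,0⟩⟩, mkP ![2,1,3,0] ![3,1,0,2]),
  ([3,3,2,0], ⟨⟨-1,0,-1,0⟩,⟨-1,0,-1,0⟩,⟨1,0,-1,0⟩,⟨-1,0,1,0⟩⟩, mkP ![0,2,3,1] ![0,3,1,2]),
  ([3,3,2,1], ⟨⟨-1,0,-1,0⟩,⟨-1,0,1,0⟩,⟨1,0,1,0⟩,⟨-1,0,1,0⟩⟩, mkP ![1,2,0,3] ![2,0,1,3]),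
  ([3,3,3,0], ⟨⟨0,0,0,0⟩,⟨0,0,0,-2⟩,⟨0,-2,0,0⟩,⟨0,0,0,0⟩⟩, mkP ![0,1,3,2] ![0,1,3,2])]
def Tb4 : List (List (Fin 4) × V × Equiv.Perm (Fin 4)) := [
  ([3,3,3,1], ⟨⟨0,-1,0,-1⟩,⟨0,-1,0,-1⟩,⟨0,-1,0,-1⟩,⟨0,1,0,1⟩⟩, mkP ![2,1,0,3] ![2,1,0,3]),
  ([3,3,3,2], ⟨⟨0,-1,0,-1⟩,⟨0,1,0,-1⟩,⟨0,-1,0,1⟩,⟨0,1,0,1⟩⟩, mkP ![0,2,1,3] ![0,2,1,3]),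
  ([0,2,0,1,0], ⟨⟨0,0,0,2⟩,⟨0,0,0,0⟩,⟨0,0,0,0⟩,⟨0,2,0,0⟩⟩, mkP ![2,3,1,0] ![3,2,0,1]),
  ([1,2,1,0,1], ⟨⟨0,-1,0,-1⟩,⟨0,-1,0,-1⟩,⟨0,1,0,1⟩,⟨0,-1,0,-1⟩⟩, mkP ![3,0,1,2] ![1,2,3,0]),
  ([2,0,2,0,1], ⟨⟨0,1,0,1⟩,⟨0,-1,0,1⟩,⟨0,-1,0,1⟩,⟨0,1,0,1⟩⟩, mkP ![1,3,0,2] ![2,0,3,1]),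
  ([2,1,0,1,0], ⟨⟨0,-2,0,0⟩,⟨0,0,0,0⟩,⟨0,0,0,0⟩,⟨0,0,0,-2⟩⟩, mkP ![3,2,0,1] ![2,3,1,0]),
  ([2,1,2,1,0], ⟨⟨0,-1,0,-1⟩,⟨0,-1,0,1⟩,⟨0,-1,0,1⟩,⟨0,-1,0,-1⟩⟩, mkP ![2,0,3,1] ![1,3,0,2]),
  ([3,0,1,2,0], ⟨⟨-1,0,1,0⟩,⟨-1,0,-1,0⟩,⟨-1,0,1,0⟩,⟨1,0,1,0⟩⟩, mkP ![3,0,2,1] ![1,3,2,0]),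
  ([3,0,2,0,1], ⟨⟨0,0,0,0⟩,⟨0,0,-2,0⟩,⟨0,0,2,0⟩,⟨0,0,0,0⟩⟩, mkP ![2,3,0,1] ![2,3,0,1]),
  ([3,0,2,1,0], ⟨⟨1,0,1,0⟩,⟨1,0,1,0⟩,⟨1,0,-1,0⟩,⟨-1,0,1,0⟩⟩, mkP ![1,3,2,0] ![3,0,2,1]),
  ([3,1,0,1,0], ⟨⟨1,0,-1,0⟩,⟨-1,0,1,0⟩,⟨-1,0,-1,0⟩,⟨-1,0,-1,0⟩⟩, mkP ![3,1,0,2] ![2,1,3,0]),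
  ([3,1,0,2,0], ⟨⟨0,0,0,0⟩,⟨0,0,2,0⟩,⟨0,0,-2,0⟩,⟨0,0,0,0⟩⟩, mkP ![2,3,0,1] ![2,3,0,1]),
  ([3,1,2,1,0], ⟨⟨2,0,0,0⟩,⟨0,0,0,0⟩,⟨0,0,0,0⟩,⟨-2,0,0,0⟩⟩, mkP ![1,0,3,2] ![1,0,3,2]),
  ([3,2,0,1,0], ⟨⟨0,0,0,0⟩,⟨-2,0,0,0⟩,⟨-2,0,0,0⟩,⟨0,0,0,0⟩⟩, mkP ![3,2,1,0] ![3,2,1,0]),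
  ([3,2,0,2,0], ⟨⟨-1,0,-1,0⟩,⟨-1,0,1,0⟩,⟨-1,0,-1,0⟩,⟨1,0,-1,0⟩⟩, mkP ![0,3,1,2] ![0,2,3,1]),
  ([3,2,1,0,1], ⟨⟨0,0,0,0⟩,⟨2,0,0,0⟩,⟨2,0,0,0⟩,⟨0,0,0,0⟩⟩, mkP ![3,2,1,0] ![3,2,1,0])]
def Tb5 : List (List (Fin 4) × V × Equiv.Perm (Fin 4)) := [
  ([3,2,1,2,0], ⟨⟨-2,0,0,0⟩,⟨0,0,0,0⟩,⟨0,0,0,0⟩,⟨2,0,0,0⟩⟩, mkP ![1,0,3,2] ![1,0,3,2]),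
  ([3,2,1,2,1], ⟨⟨-1,0,-1,0⟩,⟨1,0,1,0⟩,⟨1,0,-1,0⟩,⟨1,0,-1,0⟩⟩, mkP ![2,0,1,3] ![1,2,0,3]),
  ([3,3,2,1,0], ⟨⟨0,1,0,1⟩,⟨0,-1,0,-1⟩,⟨0,1,0,1⟩,⟨0,1,0,1⟩⟩, mkP ![1,2,3,0] ![3,0,1,2]),
  ([3,3,3,1,0], ⟨⟨-1,0,-1,0⟩,⟨1,0,-1,0⟩,⟨1,0,1,0⟩,⟨1,0,-1,0⟩⟩, mkP ![2,1,3,0] ![3,1,0,2]),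
  ([3,3,3,2,0], ⟨⟨1,0,-1,0⟩,⟨1,0,-1,0⟩,⟨1,0,1,0⟩,⟨-1,0,-1,0⟩⟩, mkP ![0,2,3,1] ![0,3,1,2]),
  ([3,3,3,2,1], ⟨⟨1,0,-1,0⟩,⟨-1,0,-1,0⟩,⟨-1,0,1,0⟩,⟨-1,0,-1,0⟩⟩, mkP ![1,2,0,3] ![2,0,1,3]),
  ([1,2,1,0,1,0], ⟨⟨-1,0,-1,0⟩,⟨1,0,-1,0⟩,⟨-1,0,-1,0⟩,⟨-1,0,1,0⟩⟩, mkP ![3,0,2,1] ![1,3,2,0]),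
  ([2,0,2,0,1,0], ⟨⟨-1,0,1,0⟩,⟨-1,0,1,0⟩,⟨1,0,1,0⟩,⟨-1,0,-1,0⟩⟩, mkP ![1,3,2,0] ![3,0,2,1]),
  ([3,0,2,0,1,0], ⟨⟨0,-2,0,0⟩,⟨0,0,0,0⟩,⟨0,0,0,0⟩,⟨0,0,0,2⟩⟩, mkP ![2,3,1,0] ![3,2,0,1]),
  ([3,1,2,1,0,1], ⟨⟨0,1,0,-1⟩,⟨0,1,0,-1⟩,⟨0,-1,0,1⟩,⟨0,1,0,-1⟩⟩, mkP ![3,0,1,2] ![1,2,3,0]),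
  ([3,2,0,2,0,1], ⟨⟨0,-1,0,1⟩,⟨0,-1,0,-1⟩,⟨0,-1,0,-1⟩,⟨0,-1,0,1⟩⟩, mkP ![1,3,0,2] ![2,0,3,1]),
  ([3,2,1,0,1,0], ⟨⟨0,0,0,-2⟩,⟨0,0,0,0⟩,⟨0,0,0,0⟩,⟨0,2,0,0⟩⟩, mkP ![3,2,0,1] ![2,3,1,0]),
  ([3,2,1,2,1,0], ⟨⟨0,1,0,-1⟩,⟨0,-1,0,-1⟩,⟨0,-1,0,-1⟩,⟨0,1,0,-1⟩⟩, mkP ![2,0,3,1] ![1,3,0,2]),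
  ([3,3,3,2,1,0], ⟨⟨0,-1,0,1⟩,⟨0,1,0,-1⟩,⟨0,-1,0,1⟩,⟨0,-1,0,1⟩⟩, mkP ![1,2,3,0] ![3,0,1,2]),
  ([3,1,2,1,0,1,0], ⟨⟨1,0,-1,0⟩,⟨1,0,1,0⟩,⟨1,0,-1,0⟩,⟨-1,0,-1,0⟩⟩, mkP ![3,0,2,1] ![1,3,2,0]),
  ([3,2,0,2,0,1,0], ⟨⟨-1,0,-1,0⟩,⟨-1,0,-1,0⟩,⟨-1,0,1,0⟩,⟨1,0,-1,0⟩⟩, mkP ![1,3,2,0] ![3,0,2,1])]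
def Tbl : List (List (Fin 4) × V × Equiv.Perm (Fin 4)) := Tb0 ++ Tb1 ++ Tb2 ++ Tb3 ++ Tb4 ++ Tb5
set_option maxRecDepth 100000

theorem C1 : Tbl.length = 96 := rfl
theorem C2 : (Tbl.map (fun p => p.2.1)).Nodup := by decide
theorem C3b : ([], vone, (1 : Equiv.Perm (Fin 4))) ∈ Tbl := by decide
set_option maxHeartbeats 1000000 in
theorem C4 : ∀ p ∈ Tbl, p.1 ≠ [] →
    ∃ q ∈ Tbl, q.1 = p.1.tail ∧ vconv (gen (p.1.headD 0)) q.2.1 = vdouble p.2.1 := by decide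
theorem C3 : ∀ p ∈ Tbl, p.1 = [] → p.2.1 = vone := by decide
set_option maxHeartbeats 4000000 in
theorem C5 : ∀ (k : Fin 4), ∀ p ∈ Tbl,
    ∃ q ∈ Tbl, vdouble q.2.1 = vconv (gen k) p.2.1 ∧ q.2.2 = gperm k * p.2.2 := by decide
theorem C6 : ∀ k : Fin 4, ([k], gen k, gperm k) ∈ Tbl := by decide
set_option maxHeartbeats 1000000 in
theorem C7 : ∀ σ : Equiv.Perm (Fin 4), ∃ p ∈ Tbl, p.2.2 = σ := by decide
set_option maxHeartbeats 2000000 in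
theorem C8 : ∀ p ∈ Tbl, (vconv p.2.1 (gen 0) = vconv (gen 0) p.2.1 ∧
    vconv p.2.1 (gen 1) = vconv (gen 1) p.2.1) → p.2.2 = 1 := by decide
theorem C9 : ∀ p ∈ Tbl, p.2.2 = 1 →
    (p.2.1 = vone ∨ p.2.1 = viI ∨ p.2.1 = vmone ∨ p.2.1 = vmiI) := by decide
theorem C10a : ∀ k : Fin 4, k ≠ 3 → vconv (gen k) (gen k) = vdouble vone := by decide
theorem C10b : vconv (gen 3) (gen 3) = vdouble vmone := by decide
theorem C10c : vconv vmone vmone = vdouble vone := by decide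
noncomputable section

open Matrix Complex

def zet : ℂ := ((Real.sqrt 2 : ℝ) : ℂ)⁻¹ * (1 + Complex.I)

lemma sqrt2_sq : ((Real.sqrt 2 : ℝ) : ℂ) ^ 2 = 2 := by
  rw [sq]
  exact_mod_cast congrArg (Complex.ofReal) (Real.mul_self_sqrt (by norm_num : (0:ℝ) ≤ 2))

lemma sqrt2_ne : ((Real.sqrt 2 : ℝ) : ℂ) ≠ 0 := by
  simp only [ne_eq, Complex.ofReal_eq_zero]
  positivity

lemma zet_sq : zet ^ 2 = Complex.I := by
  have h1 : ((1:ℂ) + Complex.I) ^ 2 = 2 * Complex.I := by linear_combination Complex.I_sq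
  rw [zet, mul_pow, inv_pow, sqrt2_sq, h1]
  ring

lemma zet_cube : zet ^ 3 = Complex.I * zet := by
  rw [pow_succ, zet_sq]

lemma zet_pow4 : zet ^ 4 = -1 := by
  have h : zet ^ 4 = (zet ^ 2) ^ 2 := by ring
  rw [h, zet_sq, Complex.I_sq]

def iK (u : Kk) : ℂ := ((u.x : ℂ) + u.y * zet + u.z * zet ^ 2 + u.w * zet ^ 3) / 2

lemma iK_conv (u v : Kk) : iK (kconv u v) = 2 * (iK u * iK v) := by
  obtain ⟨a, b, c, d⟩ := u
  obtain ⟨e, f, g, h⟩ := v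
  simp only [iK, kconv]
  push_cast
  linear_combination (-(((b:ℂ)*h + c*g + d*f) + ((c:ℂ)*h + d*g)*zet + (d:ℂ)*h*zet^2)/2) * zet_pow4

lemma iK_add (u v : Kk) : iK (kadd u v) = iK u + iK v := by
  obtain ⟨a, b, c, d⟩ := u; obtain ⟨e, f, g, h⟩ := v
  simp only [iK, kadd]; push_cast; ring

lemma iK_double (u : Kk) : iK (kdouble u) = 2 * iK u := by
  obtain ⟨a, b, c, d⟩ := u
  simp only [iK, kdouble]; push_cast; ring

lemma irr_aux (u : ℝ) (hirr : Irrational u) (p q : ℤ)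
    (h : (p : ℝ) + (q : ℝ) * u = 0) : p = 0 ∧ q = 0 := by
  by_cases hq : q = 0
  · subst hq; simp at h; exact ⟨by exact_mod_cast h, rfl⟩
  · exfalso
    apply hirr
    refine ⟨(-p : ℚ) / (q : ℚ), ?_⟩
    have hq' : (q : ℝ) ≠ 0 := by exact_mod_cast hq
    push_cast
    field_simp
    linarith

lemma key_indep (a b c d : ℤ)
    (h : (a : ℂ) + (b : ℂ) * zet + (c : ℂ) * zet ^ 2 + (d : ℂ) * zet ^ 3 = 0) :
    a = 0 ∧ b = 0 ∧ c = 0 ∧ d = 0 := by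
  rw [zet_cube, zet_sq] at h
  have hz : zet = ((((Real.sqrt 2)⁻¹ : ℝ)) : ℂ) * (1 + Complex.I) := by
    rw [zet, Complex.ofReal_inv]
  rw [hz] at h
  set s : ℝ := (Real.sqrt 2)⁻¹ with hs
  have hre := congrArg Complex.re h
  have him := congrArg Complex.im h
  simp only [Complex.add_re, Complex.add_im, Complex.mul_re, Complex.mul_im,
    Complex.intCast_re, Complex.intCast_im, Complex.ofReal_re, Complex.ofReal_im,
    Complex.I_re, Complex.I_im, Complex.one_re, Complex.one_im, Complex.zero_re,
    Complex.zero_im] at hre him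
  have hirr : Irrational s := irrational_sqrt_two.inv
  have h1 : ((a : ℤ) : ℝ) + ((b - d : ℤ) : ℝ) * s = 0 := by push_cast; linarith
  have h2 : ((c : ℤ) : ℝ) + ((b + d : ℤ) : ℝ) * s = 0 := by push_cast; linarith
  obtain ⟨ha, hbd⟩ := irr_aux s hirr a (b - d) h1
  obtain ⟨hc, hbd'⟩ := irr_aux s hirr c (b + d) h2
  refine ⟨ha, by omega, hc, by omega⟩

lemma iK_inj : Function.Injective iK := by
  intro u v huv
  obtain ⟨a, b, c, d⟩ := u; obtain ⟨e, f, g, h⟩ := v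
  have hz : ((a - e : ℤ) : ℂ) + ((b - f : ℤ) : ℂ) * zet + ((c - g : ℤ) : ℂ) * zet ^ 2
      + ((d - h : ℤ) : ℂ) * zet ^ 3 = 0 := by
    simp only [iK] at huv
    push_cast
    linear_combination 2 * huv
  obtain ⟨h1, h2, h3, h4⟩ := key_indep _ _ _ _ hz
  simp only [Kk.mk.injEq]
  omega

def iV (X : V) : Matrix (Fin 2) (Fin 2) ℂ := !![iK X.a, iK X.b; iK X.c, iK X.d]

lemma iV_conv (X Y : V) : iV (vconv X Y) = (2 : ℂ) • (iV X * iV Y) := by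
  ext i j
  fin_cases i <;> fin_cases j <;>
    simp [iV, vconv, Matrix.mul_apply, Fin.sum_univ_two, iK_add, iK_conv] <;> try ring

lemma iV_double (X : V) : iV (vdouble X) = (2 : ℂ) • iV X := by
  ext i j
  fin_cases i <;> fin_cases j <;> simp [iV, vdouble, iK_double]

lemma iK_one : iK ⟨2, 0, 0, 0⟩ = 1 := by simp [iK]; try norm_num
lemma iK_zero : iK ⟨0, 0, 0, 0⟩ = 0 := by simp [iK]

lemma iV_one : iV vone = 1 := by
  ext i j
  fin_cases i <;> fin_cases j <;>
    simp [iV, vone, iK_one, iK_zero, Matrix.one_apply]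

lemma iV_inj : Function.Injective iV := by
  intro X Y hXY
  obtain ⟨a, b, c, d⟩ := X; obtain ⟨e, f, g, h⟩ := Y
  simp only [iV] at hXY
  have h00 := congrFun (congrFun hXY 0) 0
  have h01 := congrFun (congrFun hXY 0) 1
  have h10 := congrFun (congrFun hXY 1) 0
  have h11 := congrFun (congrFun hXY 1) 1
  simp only [Matrix.cons_val', Matrix.cons_val_zero, Matrix.cons_val_one, Matrix.head_cons,
    Matrix.head_fin_const, Matrix.empty_val', Matrix.cons_val_fin_one,
    Matrix.of_apply] at h00 h01 h10 h11
  simp only [V.mk.injEq]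
  exact ⟨iK_inj h00, iK_inj h01, iK_inj h10, iK_inj h11⟩

lemma iK_I : iK ⟨0, 0, 2, 0⟩ = Complex.I := by
  simp [iK, zet_sq]; try ring

lemma iK_mI : iK ⟨0, 0, -2, 0⟩ = -Complex.I := by
  simp [iK, zet_sq]; try ring

lemma iK_mone : iK ⟨-2, 0, 0, 0⟩ = -1 := by simp [iK]; try norm_num

lemma iV_viI : iV viI = Complex.I • (1 : Matrix (Fin 2) (Fin 2) ℂ) := by
  ext i j
  fin_cases i <;> fin_cases j <;>
    simp [iV, viI, iK_I, iK_zero, Matrix.one_apply]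

lemma iV_vmone : iV vmone = (-1 : ℂ) • (1 : Matrix (Fin 2) (Fin 2) ℂ) := by
  ext i j
  fin_cases i <;> fin_cases j <;>
    simp [iV, vmone, iK_mone, iK_zero, Matrix.one_apply]

lemma iV_vmiI : iV vmiI = (-Complex.I) • (1 : Matrix (Fin 2) (Fin 2) ℂ) := by
  ext i j
  fin_cases i <;> fin_cases j <;>
    simp [iV, vmiI, iK_mI, iK_zero, Matrix.one_apply]

end
noncomputable section
open Matrix Complex

lemma zet_def : zet = ((Real.sqrt 2 : ℂ))⁻¹ * (1 + Complex.I) := rfl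

lemma iK_zet : iK ⟨0,2,0,0⟩ = ((Real.sqrt 2 : ℂ))⁻¹ * (1 + Complex.I) := by
  simp only [iK]; push_cast; rw [zet_def]; ring

lemma iK_zetbar : iK ⟨0,0,0,-2⟩ = ((Real.sqrt 2 : ℂ))⁻¹ * (1 - Complex.I) := by
  simp only [iK]; rw [zet_cube]; push_cast; rw [zet_def]
  linear_combination (-(((Real.sqrt 2 : ℂ))⁻¹)) * Complex.I_sq

lemma iK_s : iK ⟨0,1,0,-1⟩ = ((Real.sqrt 2 : ℂ))⁻¹ := by
  simp only [iK]; rw [zet_cube]; push_cast; rw [zet_def]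
  linear_combination (-((Real.sqrt 2 : ℂ))⁻¹/2) * Complex.I_sq

lemma iK_ms : iK ⟨0,-1,0,1⟩ = -((Real.sqrt 2 : ℂ))⁻¹ := by
  simp only [iK]; rw [zet_cube]; push_cast; rw [zet_def]
  linear_combination (((Real.sqrt 2 : ℂ))⁻¹/2) * Complex.I_sq

lemma iK_si : iK ⟨0,1,0,1⟩ = ((Real.sqrt 2 : ℂ))⁻¹ * Complex.I := by
  simp only [iK]; rw [zet_cube]; push_cast; rw [zet_def]
  linear_combination (((Real.sqrt 2 : ℂ))⁻¹/2) * Complex.I_sq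

lemma iK_msi : iK ⟨0,-1,0,-1⟩ = -(((Real.sqrt 2 : ℂ))⁻¹ * Complex.I) := by
  simp only [iK]; rw [zet_cube]; push_cast; rw [zet_def]
  linear_combination (-((Real.sqrt 2 : ℂ))⁻¹/2) * Complex.I_sq

end
set_option maxHeartbeats 2000000 in
/-- The subgroup `G₁₃` of `GL(2, ℂ)` generated by `(1/√2)·[[0, 1+i],[1-i, 0]]`,
`(1/√2)·[[1, 1],[1, -1]]`, `(1/√2)·[[1, i],[-i, -1]]` and the scalar matrix `i·I` has
order `96`, and its image in `PGL(2, ℂ)` is isomorphic to the symmetric group `S₄`. -/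
theorem stmt_2 (g₁ g₂ g₃ g₄ : GL (Fin 2) ℂ)
    (h₁ : (g₁ : Matrix (Fin 2) (Fin 2) ℂ) =
      ((Real.sqrt 2 : ℂ))⁻¹ • !![0, 1 + Complex.I; 1 - Complex.I, 0])
    (h₂ : (g₂ : Matrix (Fin 2) (Fin 2) ℂ) =
      ((Real.sqrt 2 : ℂ))⁻¹ • !![1, 1; 1, -1])
    (h₃ : (g₃ : Matrix (Fin 2) (Fin 2) ℂ) =
      ((Real.sqrt 2 : ℂ))⁻¹ • !![1, Complex.I; -Complex.I, -1])
    (h₄ : (g₄ : Matrix (Fin 2) (Fin 2) ℂ) =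
      Complex.I • (1 : Matrix (Fin 2) (Fin 2) ℂ)) :
    Nat.card (Subgroup.closure ({g₁, g₂, g₃, g₄} : Set (GL (Fin 2) ℂ))) = 96 ∧
    Nonempty
      ((Subgroup.closure ({g₁, g₂, g₃, g₄} : Set (GL (Fin 2) ℂ))).map
          (QuotientGroup.mk' (Subgroup.center (GL (Fin 2) ℂ))) ≃*
        Equiv.Perm (Fin 4)) := by
  classical
  set S : Set (GL (Fin 2) ℂ) := {g₁, g₂, g₃, g₄} with hS
  set gg : Fin 4 → GL (Fin 2) ℂ := ![g₁, g₂, g₃, g₄] with hggdef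
  have two_ne : (2 : ℂ) ≠ 0 := two_ne_zero
  have hcancel : ∀ A B : Matrix (Fin 2) (Fin 2) ℂ, (2:ℂ) • A = (2:ℂ) • B → A = B :=
    fun A B h => smul_right_injective _ two_ne h
  have hgg : ∀ k : Fin 4, ((gg k : GL (Fin 2) ℂ) : Matrix (Fin 2) (Fin 2) ℂ) = iV (gen k) := by
    intro k
    fin_cases k
    · show (g₁ : Matrix (Fin 2) (Fin 2) ℂ) = _
      rw [h₁]
      ext i j
      fin_cases i <;> fin_cases j <;>
        simp [iV, gen, iK_zero, iK_zet, iK_zetbar, Matrix.smul_apply]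
    · show (g₂ : Matrix (Fin 2) (Fin 2) ℂ) = _
      rw [h₂]
      ext i j
      fin_cases i <;> fin_cases j <;>
        simp [iV, gen, iK_s, iK_ms, Matrix.smul_apply]
    · show (g₃ : Matrix (Fin 2) (Fin 2) ℂ) = _
      rw [h₃]
      ext i j
      fin_cases i <;> fin_cases j <;>
        simp [iV, gen, iK_s, iK_ms, iK_si, iK_msi, Matrix.smul_apply]
    · show (g₄ : Matrix (Fin 2) (Fin 2) ℂ) = _
      rw [h₄]
      ext i j
      fin_cases i <;> fin_cases j <;>
        simp [iV, gen, iK_zero, iK_I, Matrix.one_apply, Matrix.smul_apply]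
  set wp : List (Fin 4) → GL (Fin 2) ℂ := fun w => (w.map gg).prod with hwp
  have hwp_nil : wp [] = 1 := rfl
  have hwp_cons : ∀ (k : Fin 4) (w : List (Fin 4)), wp (k :: w) = gg k * wp w := by
    intro k w; simp [hwp]
  have hbr : ∀ (w : List (Fin 4)) (m : V) (σ : Equiv.Perm (Fin 4)), (w, m, σ) ∈ Tbl →
      ((wp w : GL (Fin 2) ℂ) : Matrix (Fin 2) (Fin 2) ℂ) = iV m := by
    intro w
    induction w with
    | nil =>
      intro m σ hm
      have h0 := C3 _ hm rfl
      simp only at h0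
      rw [h0, hwp_nil, iV_one, Units.val_one]
    | cons k w ih =>
      intro m σ hm
      obtain ⟨q, hq, hq1, hq2⟩ := C4 _ hm (by simp)
      obtain ⟨w', m', σ'⟩ := q
      simp only [List.tail_cons, List.headD_cons] at hq1 hq2
      rw [hq1] at hq
      have hb := ih m' σ' hq
      apply hcancel
      calc (2:ℂ) • ((wp (k :: w) : GL (Fin 2) ℂ) : Matrix (Fin 2) (Fin 2) ℂ)
          = (2:ℂ) • (iV (gen k) * iV m') := by
            rw [hwp_cons, Units.val_mul, hgg, hb]
        _ = iV (vconv (gen k) m') := (iV_conv _ _).symm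
        _ = iV (vdouble m) := by rw [hq2]
        _ = (2:ℂ) • iV m := iV_double m
  have hggS : ∀ k : Fin 4, gg k ∈ S := by
    intro k; fin_cases k <;> simp [hS, hggdef]
  have hSk : ∀ y ∈ S, ∃ k : Fin 4, gg k = y := by
    intro y hy
    rw [hS] at hy
    simp only [Set.mem_insert_iff, Set.mem_singleton_iff] at hy
    rcases hy with h | h | h | h
    · exact ⟨0, by simp [hggdef, h]⟩
    · exact ⟨1, by simp [hggdef, h]⟩
    · exact ⟨2, by simp [hggdef, h]⟩
    · exact ⟨3, by simp [hggdef, h]⟩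
  set MC : Submonoid (GL (Fin 2) ℂ) := Submonoid.closure S with hMC
  have hwpMC : ∀ w : List (Fin 4), wp w ∈ MC := by
    intro w
    induction w with
    | nil => exact one_mem MC
    | cons k w ih =>
      rw [hwp_cons]
      exact mul_mem (Submonoid.subset_closure (hggS k)) ih
  have hsq : ∀ k : Fin 4, k ≠ 3 → gg k * gg k = 1 := by
    intro k hk
    apply Units.ext
    apply hcancel
    rw [Units.val_mul, Units.val_one, hgg, ← iV_conv, C10a k hk, iV_double, iV_one]
  have hg4sq : ((gg 3 * gg 3 : GL (Fin 2) ℂ) : Matrix (Fin 2) (Fin 2) ℂ) = iV vmone := by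
    apply hcancel
    rw [Units.val_mul, hgg, ← iV_conv, C10b, iV_double]
  have hg4pow : (gg 3 * gg 3) * (gg 3 * gg 3) = (1 : GL (Fin 2) ℂ) := by
    apply Units.ext
    apply hcancel
    rw [Units.val_mul, Units.val_one, hg4sq, ← iV_conv, C10c, iV_double, iV_one]
  have hSM : (Subgroup.closure S).toSubmonoid = MC := by
    rw [Subgroup.closure_toSubmonoid]
    apply le_antisymm
    · apply Submonoid.closure_le.mpr
      apply Set.union_subset
      · exact Submonoid.subset_closure
      · intro x hx
        rw [Set.mem_inv] at hx
        obtain ⟨k, hk⟩ := hSk x⁻¹ hx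
        have hxk : x = (gg k)⁻¹ := by rw [hk, inv_inv]
        by_cases h3 : k = 3
        · subst h3
          have hinv : (gg 3)⁻¹ = gg 3 * (gg 3 * gg 3) := by
            apply inv_eq_of_mul_eq_one_right
            rw [← mul_assoc]
            exact hg4pow
          rw [hxk, hinv]
          exact mul_mem (Submonoid.subset_closure (hggS 3))
            (mul_mem (Submonoid.subset_closure (hggS 3)) (Submonoid.subset_closure (hggS 3)))
        · have hinv : (gg k)⁻¹ = gg k := inv_eq_of_mul_eq_one_right (hsq k h3)
          rw [hxk, hinv]
          exact Submonoid.subset_closure (hggS k)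
    · exact Submonoid.closure_mono Set.subset_union_left
  have hmem_iff : ∀ x : GL (Fin 2) ℂ, x ∈ Subgroup.closure S ↔ x ∈ MC := by
    intro x
    rw [← Subgroup.mem_toSubmonoid, hSM]
  set fh : GL (Fin 2) ℂ → Equiv.Perm (Fin 4) := fun x =>
    if h : ∃ p, p ∈ Tbl ∧ iV p.2.1 = (x : Matrix (Fin 2) (Fin 2) ℂ) then h.choose.2.2 else 1
    with hfhdef
  have hfh_eq : ∀ (x : GL (Fin 2) ℂ) (p : List (Fin 4) × V × Equiv.Perm (Fin 4)), p ∈ Tbl →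
      iV p.2.1 = (x : Matrix (Fin 2) (Fin 2) ℂ) → fh x = p.2.2 := by
    intro x p hp hpx
    have hex : ∃ q, q ∈ Tbl ∧ iV q.2.1 = (x : Matrix (Fin 2) (Fin 2) ℂ) := ⟨p, hp, hpx⟩
    rw [hfhdef]
    simp only [dif_pos hex]
    obtain ⟨hc1, hc2⟩ := hex.choose_spec
    have hm : hex.choose.2.1 = p.2.1 := iV_inj (hc2.trans hpx.symm)
    have heq := List.inj_on_of_nodup_map C2 hc1 hp hm
    rw [heq]
  have hfh_wp : ∀ (p : List (Fin 4) × V × Equiv.Perm (Fin 4)), p ∈ Tbl →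
      fh (wp p.1) = p.2.2 := by
    intro p hp
    exact hfh_eq _ p hp (hbr p.1 p.2.1 p.2.2 hp).symm
  have hfh_one : fh 1 = 1 := by
    have h := hfh_eq 1 ([], vone, 1) C3b (by rw [iV_one, Units.val_one])
    simpa using h
  have hfh_gen : ∀ k : Fin 4, fh (gg k) = gperm k := by
    intro k
    exact hfh_eq (gg k) ([k], gen k, gperm k) (C6 k) (hgg k).symm
  have hA : ∀ x ∈ MC, ∀ p ∈ Tbl, ∃ q ∈ Tbl, wp q.1 = x * wp p.1 := by
    intro x hx
    induction hx using Submonoid.closure_induction with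
    | mem y hy =>
      obtain ⟨k, rfl⟩ := hSk y hy
      intro p hp
      obtain ⟨q, hq, hq1, hq2⟩ := C5 k p hp
      refine ⟨q, hq, ?_⟩
      apply Units.ext
      apply hcancel
      calc (2:ℂ) • ((wp q.1 : GL (Fin 2) ℂ) : Matrix (Fin 2) (Fin 2) ℂ)
          = (2:ℂ) • iV q.2.1 := by rw [hbr q.1 q.2.1 q.2.2 hq]
        _ = iV (vdouble q.2.1) := (iV_double _).symm
        _ = iV (vconv (gen k) p.2.1) := by rw [hq1]
        _ = (2:ℂ) • (iV (gen k) * iV p.2.1) := iV_conv _ _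
        _ = (2:ℂ) • ((gg k * wp p.1 : GL (Fin 2) ℂ) : Matrix (Fin 2) (Fin 2) ℂ) := by
            rw [Units.val_mul, hgg, hbr p.1 p.2.1 p.2.2 hp]
    | one =>
      intro p hp
      exact ⟨p, hp, by rw [one_mul]⟩
    | mul y z hy hz ihy ihz =>
      intro p hp
      obtain ⟨q, hq, hq1⟩ := ihz p hp
      obtain ⟨r, hr, hr1⟩ := ihy q hq
      exact ⟨r, hr, by rw [hr1, hq1, mul_assoc]⟩
  have hrep : ∀ x ∈ MC, ∃ p ∈ Tbl, wp p.1 = x := by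
    intro x hx
    obtain ⟨q, hq, hq1⟩ := hA x hx ([], vone, 1) C3b
    exact ⟨q, hq, by rw [hq1, hwp_nil, mul_one]⟩
  have hB : ∀ x ∈ MC, ∀ p ∈ Tbl, fh (x * wp p.1) = fh x * p.2.2 := by
    intro x hx
    induction hx using Submonoid.closure_induction with
    | mem y hy =>
      obtain ⟨k, rfl⟩ := hSk y hy
      intro p hp
      obtain ⟨q, hq, hq1, hq2⟩ := C5 k p hp
      have hqq : wp q.1 = gg k * wp p.1 := by
        apply Units.ext
        apply hcancel
        calc (2:ℂ) • ((wp q.1 : GL (Fin 2) ℂ) : Matrix (Fin 2) (Fin 2) ℂ)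
            = (2:ℂ) • iV q.2.1 := by rw [hbr q.1 q.2.1 q.2.2 hq]
          _ = iV (vdouble q.2.1) := (iV_double _).symm
          _ = iV (vconv (gen k) p.2.1) := by rw [hq1]
          _ = (2:ℂ) • (iV (gen k) * iV p.2.1) := iV_conv _ _
          _ = (2:ℂ) • ((gg k * wp p.1 : GL (Fin 2) ℂ) : Matrix (Fin 2) (Fin 2) ℂ) := by
              rw [Units.val_mul, hgg, hbr p.1 p.2.1 p.2.2 hp]
      rw [← hqq, hfh_wp q hq, hq2, hfh_gen k]
    | one =>
      intro p hp
      rw [one_mul, hfh_one, one_mul, hfh_wp p hp]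
    | mul y z hy hz ihy ihz =>
      have step1 : ∀ p ∈ Tbl, fh (y * z * wp p.1) = fh y * (fh z * p.2.2) := by
        intro p hp
        obtain ⟨q, hq, hq1⟩ := hA z hz p hp
        have e1 : fh (y * z * wp p.1) = fh y * q.2.2 := by
          rw [mul_assoc, ← hq1, ihy q hq]
        have e2 : q.2.2 = fh z * p.2.2 := by
          rw [← hfh_wp q hq, hq1, ihz p hp]
        rw [e1, e2]
      have step2 : fh (y * z) = fh y * fh z := by
        have h := step1 ([], vone, 1) C3b
        simpa [hwp_nil] using h
      intro p hp
      rw [step1 p hp, step2, mul_assoc]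
  -- cardinality
  have hnodup : (Tbl.map (fun p => wp p.1)).Nodup := by
    have hmapeq : (Tbl.map (fun p => wp p.1)).map
        (fun u : GL (Fin 2) ℂ => (u : Matrix (Fin 2) (Fin 2) ℂ))
        = (Tbl.map (fun p => p.2.1)).map iV := by
      rw [List.map_map, List.map_map]
      apply List.map_congr_left
      intro p hp
      exact hbr p.1 p.2.1 p.2.2 hp
    have h2 : ((Tbl.map (fun p => wp p.1)).map
        (fun u : GL (Fin 2) ℂ => (u : Matrix (Fin 2) (Fin 2) ℂ))).Nodup := by
      rw [hmapeq]
      exact C2.map iV_inj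
    exact h2.of_map _
  have hset : (Subgroup.closure S : Set (GL (Fin 2) ℂ))
      = ↑((Tbl.map (fun p => wp p.1)).toFinset) := by
    ext x
    simp only [SetLike.mem_coe, Finset.coe_sort_coe, Finset.mem_coe, List.mem_toFinset,
      List.mem_map]
    rw [hmem_iff]
    constructor
    · intro hx
      obtain ⟨p, hp, hp1⟩ := hrep x hx
      exact ⟨p, hp, hp1⟩
    · rintro ⟨p, hp, rfl⟩
      exact hwpMC p.1
  have hcard : Nat.card (Subgroup.closure S) = 96 := by
    have e1 : Nat.card (Subgroup.closure S)
        = Nat.card ((Subgroup.closure S : Set (GL (Fin 2) ℂ))) := rfl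
    rw [e1, hset, Nat.card_coe_set_eq, Set.ncard_coe_finset,
      List.toFinset_card_of_nodup hnodup, List.length_map, C1]
  -- the homomorphism to S4
  let f : (Subgroup.closure S) →* Equiv.Perm (Fin 4) := {
    toFun := fun x => fh x.1
    map_one' := hfh_one
    map_mul' := by
      intro x y
      show fh ((x * y : Subgroup.closure S) : GL (Fin 2) ℂ) = fh x.1 * fh y.1
      rw [Subgroup.coe_mul]
      obtain ⟨p, hp, hp1⟩ := hrep y.1 ((hmem_iff y.1).mp y.2)
      calc fh (x.1 * y.1) = fh (x.1 * wp p.1) := by rw [hp1]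
        _ = fh x.1 * p.2.2 := hB x.1 ((hmem_iff x.1).mp x.2) p hp
        _ = fh x.1 * fh y.1 := by rw [← hfh_wp p hp, hp1] }
  have fsurj : Function.Surjective f := by
    intro σ
    obtain ⟨p, hp, hpσ⟩ := C7 σ
    refine ⟨⟨wp p.1, (hmem_iff _).mpr (hwpMC p.1)⟩, ?_⟩
    show fh (wp p.1) = σ
    rw [hfh_wp p hp, hpσ]
  set π := QuotientGroup.mk' (Subgroup.center (GL (Fin 2) ℂ)) with hπ
  have hker : (π.comp (Subgroup.closure S).subtype).ker = f.ker := by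
    ext x
    simp only [MonoidHom.mem_ker, MonoidHom.comp_apply, Subgroup.coe_subtype, hπ,
      QuotientGroup.mk'_apply]
    rw [QuotientGroup.eq_one_iff]
    constructor
    · intro hc
      obtain ⟨p, hp, hp1⟩ := hrep x.1 ((hmem_iff x.1).mp x.2)
      have hx1 : (x.1 : Matrix (Fin 2) (Fin 2) ℂ) = iV p.2.1 := by
        rw [← hp1]; exact hbr p.1 p.2.1 p.2.2 hp
      have hcom : ∀ k : Fin 4, vconv p.2.1 (gen k) = vconv (gen k) p.2.1 := by
        intro k
        apply iV_inj
        have hval := congrArg (Units.val) (Subgroup.mem_center_iff.mp hc (gg k))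
        rw [Units.val_mul, Units.val_mul] at hval
        rw [iV_conv, iV_conv, ← hx1, ← hgg k, hval]
      have hperm := C8 p hp ⟨hcom 0, hcom 1⟩
      show fh x.1 = 1
      rw [← hp1, hfh_wp p hp, hperm]
    · intro hf
      obtain ⟨p, hp, hp1⟩ := hrep x.1 ((hmem_iff x.1).mp x.2)
      have hfx : fh x.1 = p.2.2 := by rw [← hp1, hfh_wp p hp]
      have hp2 : p.2.2 = 1 := by rw [← hfx]; exact hf
      have hx1 : (x.1 : Matrix (Fin 2) (Fin 2) ℂ) = iV p.2.1 := by
        rw [← hp1]; exact hbr p.1 p.2.1 p.2.2 hp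
      have hsc : ∃ c : ℂ, (x.1 : Matrix (Fin 2) (Fin 2) ℂ) = c • 1 := by
        rcases C9 p hp hp2 with h | h | h | h
        · exact ⟨1, by rw [hx1, h, iV_one, one_smul]⟩
        · exact ⟨Complex.I, by rw [hx1, h, iV_viI]⟩
        · exact ⟨-1, by rw [hx1, h, iV_vmone]⟩
        · exact ⟨-Complex.I, by rw [hx1, h, iV_vmiI]⟩
      obtain ⟨c, hc⟩ := hsc
      apply Subgroup.mem_center_iff.mpr
      intro g
      apply Units.ext
      rw [Units.val_mul, Units.val_mul, hc, mul_smul_comm, smul_mul_assoc, mul_one, one_mul]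
  have hrange : (π.comp (Subgroup.closure S).subtype).range = (Subgroup.closure S).map π := by
    rw [MonoidHom.range_comp, Subgroup.range_subtype]
  refine ⟨hcard, ⟨?_⟩⟩
  exact ((MulEquiv.subgroupCongr hrange).symm.trans
    (QuotientGroup.quotientKerEquivRange (π.comp (Subgroup.closure S).subtype)).symm).trans
    ((QuotientGroup.quotientMulEquivOfEq hker).trans
      (QuotientGroup.quotientKerEquivOfSurjective f fsurj))
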